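/- Let A be a real m×n matrix with no zero row, b ∈ ℝ^m, and λ ∈ (0,1). Consider the randomized Kaczmarz iteration: starting from x⁰ ∈ Range(Aᵀ), at step k a row index i_k is drawn independently with probability ‖A_{i_k,:}‖₂²/‖A‖_F², and x^{k+1} = x^k − λ (A_{i_k,:} x^k − b_{i_k}) / ‖A_{i_k,:}‖₂² · A_{i_k,:}ᵀ. Let e = A x̄ − b, a_min² = min_{i∈[m]} ‖A_{i,:}‖₂², and a_max² = max_{i∈[m]} ‖A_{i,:}‖₂². Then for every k ≥ 0, E[‖x^k − x̄‖₂²] ≤ (1 − 2λ(1−λ) σ_min(A)²/‖A‖_F²)^k ‖x⁰ − x̄‖₂² + λ a_max² ‖e‖₂² / ((1−λ) a_min² σ_min(A)²), where E[g(x^k)] = ∑_{(i_0,…,i_{k−1}) ∈ [m]^k} (∏_{j<k} ‖A_{i_j,:}‖₂²/‖A‖_F²) · g(x^k(i_0,…,i_{k−1})). -/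

import Mathlib

open Matrix
open scoped RealInnerProductSpace

/-- `mulE A x` is the matrix-vector product `A x`, viewed as a map between
Euclidean spaces (so that `‖·‖` is the Euclidean norm and `⟪·,·⟫` the dot product). -/
noncomputable def mulE {m n : ℕ} (A : Matrix (Fin m) (Fin n) ℝ)
    (x : EuclideanSpace ℝ (Fin n)) : EuclideanSpace ℝ (Fin m) :=
  Matrix.toEuclideanLin A x

/-- `rowE A i` is the `i`-th row of `A` (i.e. the vector `A_{i,:}ᵀ`),
viewed as an element of Euclidean space. -/
noncomputable def rowE {m n : ℕ} (A : Matrix (Fin m) (Fin n) ℝ) (i : Fin m) :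
    EuclideanSpace ℝ (Fin n) :=
  (EuclideanSpace.equiv (Fin n) ℝ).symm (A i)

/-- One step of the RKAS method: `x⁺ = x − α A_{i,:}ᵀ` with the adaptive
stepsize `α = ⟨A A_{i,:}ᵀ, A x − b⟩ / ‖A A_{i,:}ᵀ‖²`. -/
noncomputable def rkasStep {m n : ℕ} (A : Matrix (Fin m) (Fin n) ℝ)
    (b : EuclideanSpace ℝ (Fin m)) (x : EuclideanSpace ℝ (Fin n)) (i : Fin m) :
    EuclideanSpace ℝ (Fin n) :=
  x - (⟪mulE A (rowE A i), mulE A x - b⟫ / ‖mulE A (rowE A i)‖ ^ 2) • rowE A i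

/-- `frobSq A = ‖A‖_F²`, the squared Frobenius norm of `A`. -/
noncomputable def frobSq {m n : ℕ} (A : Matrix (Fin m) (Fin n) ℝ) : ℝ :=
  ∑ i, ∑ j, A i j ^ 2

/-- One step of the randomized Kaczmarz method with fixed stepsize `λ`:
`x⁺ = x − λ (A_{i,:} x − b_i)/‖A_{i,:}‖² · A_{i,:}ᵀ`. -/
noncomputable def rkStep {m n : ℕ} (A : Matrix (Fin m) (Fin n) ℝ)
    (b : EuclideanSpace ℝ (Fin m)) (lam : ℝ)
    (x : EuclideanSpace ℝ (Fin n)) (i : Fin m) :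
    EuclideanSpace ℝ (Fin n) :=
  x - (lam * (⟪rowE A i, x⟫ - b i) / ‖rowE A i‖ ^ 2) • rowE A i

/-- `rkSeq A b lam x0 k s` is the RK iterate `x^k` obtained from the initial point
`x0` using stepsize `lam` and row indices `s = (i_0, …, i_{k-1}) ∈ [m]^k`. -/
noncomputable def rkSeq {m n : ℕ} (A : Matrix (Fin m) (Fin n) ℝ)
    (b : EuclideanSpace ℝ (Fin m)) (lam : ℝ) (x0 : EuclideanSpace ℝ (Fin n)) :
    (k : ℕ) → (Fin k → Fin m) → EuclideanSpace ℝ (Fin n)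
  | 0, _ => x0
  | k + 1, s => rkStep A b lam (rkSeq A b lam x0 k fun j => s j.castSucc) (s (Fin.last k))

lemma mulE_apply {m n : ℕ} (A : Matrix (Fin m) (Fin n) ℝ) (x : EuclideanSpace ℝ (Fin n)) (i : Fin m) :
    mulE A x i = ⟪rowE A i, x⟫ := by
  simp [mulE, Matrix.toEuclideanLin_apply, Matrix.mulVec, dotProduct, rowE, PiLp.inner_apply]; exact Finset.sum_congr rfl (fun _ _ => mul_comm _ _)

lemma normSq_eq {n : ℕ} (x : EuclideanSpace ℝ (Fin n)) : ‖x‖^2 = ∑ j, (x j)^2 := by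
  rw [← real_inner_self_eq_norm_sq, PiLp.inner_apply]; simp [sq]

lemma mulE_sub {m n : ℕ} (A : Matrix (Fin m) (Fin n) ℝ) (x y : EuclideanSpace ℝ (Fin n)) :
    mulE A (x - y) = mulE A x - mulE A y := map_sub (Matrix.toEuclideanLin A) x y

lemma mulE_adj {m n : ℕ} (A : Matrix (Fin m) (Fin n) ℝ) (z : EuclideanSpace ℝ (Fin n))
    (w : EuclideanSpace ℝ (Fin m)) : ⟪mulE A z, w⟫ = ⟪z, mulE Aᵀ w⟫ := by
  simp only [PiLp.inner_apply, RCLike.inner_apply, starRingEnd_apply, star_trivial,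
    mulE, Matrix.toEuclideanLin_apply]
  show ∑ i, w i * (∑ j, A i j * z j) = ∑ j, (∑ i, Aᵀ j i * w i) * z j
  simp only [Finset.sum_mul, Finset.mul_sum, Matrix.transpose_apply]
  rw [Finset.sum_comm]
  apply Finset.sum_congr rfl; intros; apply Finset.sum_congr rfl; intros; ring

lemma rowE_ne {m n : ℕ} (A : Matrix (Fin m) (Fin n) ℝ) (i : Fin m) (h : A i ≠ 0) :
    rowE A i ≠ 0 := by
  intro hc; apply h
  have := congrArg (EuclideanSpace.equiv (Fin n) ℝ) hc
  simpa [rowE] using this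

lemma frobSq_eq {m n : ℕ} (A : Matrix (Fin m) (Fin n) ℝ) :
    frobSq A = ∑ i, ‖rowE A i‖^2 := by
  simp only [frobSq, normSq_eq]; rfl

lemma norm_mulE_sq {m n : ℕ} (A : Matrix (Fin m) (Fin n) ℝ) (z : EuclideanSpace ℝ (Fin n)) :
    ‖mulE A z‖^2 = ∑ i, ⟪rowE A i, z⟫^2 := by
  rw [normSq_eq]; simp [mulE_apply]

lemma norm_mulE_le {m n : ℕ} (A : Matrix (Fin m) (Fin n) ℝ) (z : EuclideanSpace ℝ (Fin n)) :
    ‖mulE A z‖^2 ≤ frobSq A * ‖z‖^2 := by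
  rw [norm_mulE_sq, frobSq_eq, Finset.sum_mul]
  apply Finset.sum_le_sum
  intro i _
  calc ⟪rowE A i, z⟫^2 = |⟪rowE A i, z⟫|^2 := (sq_abs _).symm
    _ ≤ (‖rowE A i‖ * ‖z‖)^2 :=
        pow_le_pow_left₀ (abs_nonneg _) (abs_real_inner_le_norm (rowE A i) z) 2
    _ = ‖rowE A i‖^2 * ‖z‖^2 := by ring

lemma step_id {m n : ℕ} (A : Matrix (Fin m) (Fin n) ℝ) (hrows : ∀ i, A i ≠ 0)
    (hF : 0 < frobSq A)
    (b : EuclideanSpace ℝ (Fin m)) (lam : ℝ)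
    (xbar : EuclideanSpace ℝ (Fin n))
    (hxbar_normal : mulE Aᵀ (mulE A xbar) = mulE Aᵀ b)
    (x : EuclideanSpace ℝ (Fin n)) :
    ∑ i, (‖rowE A i‖^2 / frobSq A) * ‖rkStep A b lam x i - xbar‖^2
      = ‖x - xbar‖^2 - (2*lam - lam^2) * ‖mulE A (x - xbar)‖^2 / frobSq A
        + lam^2 * ‖mulE A xbar - b‖^2 / frobSq A := by
  set d := x - xbar with hd
  set F := frobSq A with hFdef
  have hFne : F ≠ 0 := ne_of_gt hF
  set t : Fin m → ℝ := fun i => ⟪rowE A i, d⟫ with ht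
  set e : Fin m → ℝ := fun i => mulE A xbar i - b i with he
  have hw : ∀ i, (0:ℝ) < ‖rowE A i‖^2 := fun i =>
    pow_pos (norm_pos_iff.mpr (rowE_ne A i (hrows i))) 2
  -- per-index identity
  have key : ∀ i, (‖rowE A i‖^2 / F) * ‖rkStep A b lam x i - xbar‖^2
      = (‖rowE A i‖^2 / F) * ‖d‖^2 - (2*lam*(t i + e i)*(t i))/F
        + (lam^2*(t i + e i)^2)/F := by
    intro i
    set a := rowE A i with ha
    set c := lam * (⟪a, x⟫ - b i) / ‖a‖^2 with hc
    have hstep : rkStep A b lam x i - xbar = d - c • a := by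
      simp only [rkStep, hd, hc, ha]; abel
    have hnorm : ‖d - c • a‖^2 = ‖d‖^2 - 2*(c * t i) + c^2 * ‖a‖^2 := by
      rw [norm_sub_sq_real, real_inner_smul_right, norm_smul]
      simp only [Real.norm_eq_abs, mul_pow, sq_abs]
      rw [real_inner_comm]
    have hane : ‖a‖ ≠ 0 := norm_ne_zero_iff.mpr (ha ▸ rowE_ne A i (hrows i))
    have hin : ⟪a, x⟫ - b i = t i + e i := by
      have h1 : ⟪a, x⟫ = t i + ⟪a, xbar⟫ := by
        simp only [ht, hd, ha, inner_sub_right]; ring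
      have h0 : e i = ⟪a, xbar⟫ - b i := by
        show mulE A xbar i - b i = _
        rw [mulE_apply, ha]
      rw [h1, h0]; ring
    rw [hstep, hnorm, hc, hin]
    field_simp
  rw [Finset.sum_congr rfl (fun i _ => key i)]
  -- split the sum
  have hsplit : ∑ i, ((‖rowE A i‖^2 / F) * ‖d‖^2 - (2*lam*(t i + e i)*(t i))/F
        + (lam^2*(t i + e i)^2)/F)
      = (∑ i, (‖rowE A i‖^2) * ‖d‖^2 / F) - (2*lam/F) * (∑ i, (t i + e i)*(t i))
        + (lam^2/F) * (∑ i, (t i + e i)^2) := by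
    rw [Finset.mul_sum, Finset.mul_sum, ← Finset.sum_sub_distrib, ← Finset.sum_add_distrib]
    apply Finset.sum_congr rfl; intro i _; field_simp
  have hsum1 : ∑ i, (‖rowE A i‖^2) * ‖d‖^2 / F = ‖d‖^2 := by
    rw [← Finset.sum_div, ← Finset.sum_mul, ← frobSq_eq, ← hFdef]
    field_simp
  rw [hsplit, hsum1]
  have hTE : ∑ i, t i * e i = 0 := by
    have h1 : ∑ i, t i * e i = ⟪mulE A d, mulE A xbar - b⟫ := by
      rw [PiLp.inner_apply]
      apply Finset.sum_congr rfl
      intro i _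
      simp only [RCLike.inner_apply, starRingEnd_apply, star_trivial]
      rw [mulE_apply]
      show t i * e i = ((mulE A xbar - b) i) * t i
      exact mul_comm _ _
    rw [h1, mulE_adj, mulE_sub, hxbar_normal, sub_self, inner_zero_right]
  have hTT : ∑ i, t i ^2 = ‖mulE A d‖^2 := (norm_mulE_sq A d).symm
  have hEE : ∑ i, e i ^2 = ‖mulE A xbar - b‖^2 := by
    rw [normSq_eq]
    apply Finset.sum_congr rfl
    intro i _
    show e i ^2 = ((mulE A xbar - b) i)^2
    congr 1
  have h2 : ∑ i, (t i + e i)*(t i) = ‖mulE A d‖^2 := by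
    have : ∑ i, (t i + e i)*(t i) = ∑ i, (t i^2 + t i * e i) := by
      apply Finset.sum_congr rfl; intros; ring
    rw [this, Finset.sum_add_distrib, hTT, hTE, add_zero]
  have h3 : ∑ i, (t i + e i)^2 = ‖mulE A d‖^2 + ‖mulE A xbar - b‖^2 := by
    have : ∑ i, (t i + e i)^2 = ∑ i, (t i^2 + 2*(t i * e i) + e i^2) := by
      apply Finset.sum_congr rfl; intros; ring
    rw [this, Finset.sum_add_distrib, Finset.sum_add_distrib, hTT, hEE, ← Finset.mul_sum,
      hTE, mul_zero, add_zero]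
  rw [h2, h3]
  ring

lemma rowE_mem_range {m n : ℕ} (A : Matrix (Fin m) (Fin n) ℝ) (i : Fin m) :
    rowE A i ∈ Set.range (mulE Aᵀ) := by
  refine ⟨EuclideanSpace.single i 1, ?_⟩
  ext j
  show (Aᵀ *ᵥ (EuclideanSpace.single i 1 : EuclideanSpace ℝ (Fin m))) j = A i j
  simp [Matrix.mulVec, dotProduct, EuclideanSpace.single_apply, mul_ite]

lemma range_sub {m n : ℕ} (A : Matrix (Fin m) (Fin n) ℝ) {u v : EuclideanSpace ℝ (Fin n)}
    (hu : u ∈ Set.range (mulE Aᵀ)) (hv : v ∈ Set.range (mulE Aᵀ)) :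
    u - v ∈ Set.range (mulE Aᵀ) := by
  obtain ⟨p, hp⟩ := hu; obtain ⟨q, hq⟩ := hv
  exact ⟨p - q, by rw [← hp, ← hq]; exact map_sub (Matrix.toEuclideanLin Aᵀ) p q⟩

lemma range_sub_smul {m n : ℕ} (A : Matrix (Fin m) (Fin n) ℝ) {u : EuclideanSpace ℝ (Fin n)}
    (hu : u ∈ Set.range (mulE Aᵀ)) (c : ℝ) (i : Fin m) :
    u - c • rowE A i ∈ Set.range (mulE Aᵀ) := by
  obtain ⟨p, hp⟩ := hu; obtain ⟨q, hq⟩ := rowE_mem_range A i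
  refine ⟨p - c • q, ?_⟩
  rw [← hp, ← hq]
  show Matrix.toEuclideanLin Aᵀ (p - c • q) = _
  rw [map_sub, _root_.map_smul]
  rfl

lemma rkSeq_snoc {m n : ℕ} (A : Matrix (Fin m) (Fin n) ℝ)
    (b : EuclideanSpace ℝ (Fin m)) (lam : ℝ) (x0 : EuclideanSpace ℝ (Fin n))
    (k : ℕ) (s' : Fin k → Fin m) (i : Fin m) :
    rkSeq A b lam x0 (k+1) (Fin.snoc s' i) = rkStep A b lam (rkSeq A b lam x0 k s') i := by
  rw [rkSeq, Fin.snoc_last]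
  have h : (fun j : Fin k => (Fin.snoc s' i : Fin (k+1) → Fin m) (Fin.castSucc j)) = s' := by
    funext j; simp
  rw [h]

lemma rkSeq_mem {m n : ℕ} (A : Matrix (Fin m) (Fin n) ℝ)
    (b : EuclideanSpace ℝ (Fin m)) (lam : ℝ) (x0 : EuclideanSpace ℝ (Fin n))
    (xbar : EuclideanSpace ℝ (Fin n))
    (hx0 : x0 ∈ Set.range (mulE Aᵀ)) (hxbar : xbar ∈ Set.range (mulE Aᵀ)) :
    ∀ (k : ℕ) (s : Fin k → Fin m), rkSeq A b lam x0 k s - xbar ∈ Set.range (mulE Aᵀ)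
  | 0, _ => range_sub A hx0 hxbar
  | k + 1, s => by
    show rkStep A b lam (rkSeq A b lam x0 k fun j => s j.castSucc) (s (Fin.last k)) - xbar
        ∈ Set.range (mulE Aᵀ)
    have hrec := rkSeq_mem A b lam x0 xbar hx0 hxbar k (fun j => s j.castSucc)
    set x := rkSeq A b lam x0 k fun j => s j.castSucc
    set i := s (Fin.last k)
    have : rkStep A b lam x i - xbar
        = (x - xbar) - (lam * (⟪rowE A i, x⟫ - b i) / ‖rowE A i‖ ^ 2) • rowE A i := by
      simp only [rkStep]; abel
    rw [this]
    exact range_sub_smul A hrec _ i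

lemma snoc_sum {M : ℕ} (k : ℕ) (g : (Fin (k+1) → Fin M) → ℝ) :
    ∑ s, g s = ∑ i : Fin M, ∑ s' : Fin k → Fin M, g (Fin.snoc s' i) := by
  rw [show (∑ s, g s) = ∑ p : Fin M × (Fin k → Fin M), g ((Fin.snocEquiv (fun _ => Fin M)) p) from
      (Fintype.sum_equiv (Fin.snocEquiv (fun _ => Fin M)) _ g (fun p => rfl)).symm,
    Fintype.sum_prod_type]
  rfl

set_option maxHeartbeats 1000000 in
/-- Theorem 2.2, Needell: for the randomized Kaczmarz method with
stepsize `λ ∈ (0,1)`, started at `x⁰ ∈ Range(Aᵀ)`, with row `i` drawn with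
probability `‖A_{i,:}‖²/‖A‖_F²` at each step,
`E[‖x^k − x̄‖²] ≤ (1 − 2λ(1−λ) σ_min(A)²/‖A‖_F²)^k ‖x⁰ − x̄‖²
  + λ a_max² ‖e‖² / ((1−λ) a_min² σ_min(A)²)`, where `e = A x̄ − b`. -/
theorem rk_fixed_stepsize_convergence_horizon (m n : ℕ) (A : Matrix (Fin m) (Fin n) ℝ)
    (hA : A ≠ 0) (hrows : ∀ i, A i ≠ 0)
    (b : EuclideanSpace ℝ (Fin m))
    -- the stepsize `λ ∈ (0,1)`
    (lam : ℝ) (hlam : lam ∈ Set.Ioo (0 : ℝ) 1)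
    -- `x̄ = A†b`: the unique vector in `Range(Aᵀ)` satisfying `Aᵀ A x̄ = Aᵀ b`
    (xbar : EuclideanSpace ℝ (Fin n))
    (hxbar_mem : xbar ∈ Set.range (mulE Aᵀ))
    (hxbar_normal : mulE Aᵀ (mulE A xbar) = mulE Aᵀ b)
    -- `σ_min(A)`: the smallest nonzero singular value of `A`
    (σmin : ℝ) (hσ_pos : 0 < σmin)
    (hσ_lb : ∀ z ∈ Set.range (mulE Aᵀ), σmin * ‖z‖ ≤ ‖mulE A z‖)
    (hσ_att : ∃ z ∈ Set.range (mulE Aᵀ), z ≠ 0 ∧ ‖mulE A z‖ = σmin * ‖z‖)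
    -- `aminSq = a_min² = min_i ‖A_{i,:}‖²` and `amaxSq = a_max² = max_i ‖A_{i,:}‖²`
    (aminSq : ℝ) (hamin_lb : ∀ i, aminSq ≤ ‖rowE A i‖ ^ 2)
    (hamin_att : ∃ i, aminSq = ‖rowE A i‖ ^ 2)
    (amaxSq : ℝ) (hamax_ub : ∀ i, ‖rowE A i‖ ^ 2 ≤ amaxSq)
    (hamax_att : ∃ i, amaxSq = ‖rowE A i‖ ^ 2)
    -- the initial point `x⁰ ∈ Range(Aᵀ)`
    (x0 : EuclideanSpace ℝ (Fin n)) (hx0 : x0 ∈ Set.range (mulE Aᵀ))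
    (k : ℕ) :
    ∑ s : Fin k → Fin m,
        (∏ j, ‖rowE A (s j)‖ ^ 2 / frobSq A) *
          ‖rkSeq A b lam x0 k s - xbar‖ ^ 2
      ≤ (1 - 2 * lam * (1 - lam) * σmin ^ 2 / frobSq A) ^ k * ‖x0 - xbar‖ ^ 2
        + lam * amaxSq * ‖mulE A xbar - b‖ ^ 2
          / ((1 - lam) * aminSq * σmin ^ 2) := by
  obtain ⟨hlam0, hlam1⟩ := hlam
  have h1l : (0:ℝ) < 1 - lam := by linarith
  have hm : m ≠ 0 := by
    rintro rfl
    exact hA (by ext i j; exact i.elim0)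
  have i0 : Fin m := ⟨0, Nat.pos_of_ne_zero hm⟩
  have hwpos : ∀ i, (0:ℝ) < ‖rowE A i‖^2 :=
    fun i => pow_pos (norm_pos_iff.mpr (rowE_ne A i (hrows i))) 2
  have hF : 0 < frobSq A := by
    rw [frobSq_eq]
    exact Finset.sum_pos' (fun i _ => le_of_lt (hwpos i)) ⟨i0, Finset.mem_univ _, hwpos i0⟩
  set F := frobSq A with hFdef
  have hE0 : (0:ℝ) ≤ ‖mulE A xbar - b‖^2 := sq_nonneg _
  set q := 1 - 2 * lam * (1 - lam) * σmin ^ 2 / F with hq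
  set C := lam^2 * ‖mulE A xbar - b‖^2 / F with hC
  have hσF : σmin^2 ≤ F := by
    obtain ⟨z, hzmem, hz0, hzeq⟩ := hσ_att
    have h1 : ‖mulE A z‖^2 ≤ F * ‖z‖^2 := norm_mulE_le A z
    have h2 : ‖mulE A z‖^2 = σmin^2 * ‖z‖^2 := by rw [hzeq]; ring
    have hz2 : 0 < ‖z‖^2 := pow_pos (norm_pos_iff.mpr hz0) 2
    nlinarith
  have h1qval : 1 - q = 2 * lam * (1 - lam) * σmin ^ 2 / F := by rw [hq]; ring
  have h1q : 0 < 1 - q := by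
    rw [h1qval]
    exact div_pos (mul_pos (mul_pos (mul_pos two_pos hlam0) h1l) (pow_pos hσ_pos 2)) hF
  have hq0 : 0 ≤ q := by
    have h2 : 2*lam*(1-lam)*σmin^2 ≤ F := by
      nlinarith [sq_nonneg (2*lam - 1), pow_pos hσ_pos 2]
    have h3 : 2*lam*(1-lam)*σmin^2/F ≤ 1 := (div_le_one hF).mpr h2
    rw [hq]; linarith
  have hC0 : 0 ≤ C := by
    rw [hC]; exact div_nonneg (mul_nonneg (sq_nonneg lam) hE0) hF.le
  have hstepbound : ∀ x : EuclideanSpace ℝ (Fin n), x - xbar ∈ Set.range (mulE Aᵀ) →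
      ∑ i, (‖rowE A i‖^2 / F) * ‖rkStep A b lam x i - xbar‖^2
        ≤ q * ‖x - xbar‖^2 + C := by
    intro x hmem
    rw [step_id A hrows hF b lam xbar hxbar_normal x]
    have hσd := hσ_lb _ hmem
    have hAD : σmin^2 * ‖x-xbar‖^2 ≤ ‖mulE A (x-xbar)‖^2 := by
      have h := pow_le_pow_left₀ (by positivity) hσd 2
      calc σmin^2 * ‖x-xbar‖^2 = (σmin * ‖x-xbar‖)^2 := by ring
        _ ≤ ‖mulE A (x-xbar)‖^2 := h
    have hr0 : (0:ℝ) ≤ 2*lam - lam^2 := by nlinarith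
    have h6 : 0 ≤ (2*lam - lam^2) * (‖mulE A (x-xbar)‖^2 - σmin^2*‖x-xbar‖^2) :=
      mul_nonneg hr0 (by linarith)
    have key : 2*lam*(1-lam)*(σmin^2*‖x-xbar‖^2) ≤ (2*lam - lam^2)*‖mulE A (x-xbar)‖^2 := by
      nlinarith [sq_nonneg (lam*σmin*‖x-xbar‖)]
    have hdiv : (2*lam*(1-lam)*(σmin^2*‖x-xbar‖^2))/F
        ≤ ((2*lam - lam^2)*‖mulE A (x-xbar)‖^2)/F := by gcongr
    rw [hq, hC]
    have expand : (1 - 2*lam*(1-lam)*σmin^2/F)*‖x-xbar‖^2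
        = ‖x-xbar‖^2 - (2*lam*(1-lam)*(σmin^2*‖x-xbar‖^2))/F := by ring
    rw [expand]
    have heq : (2*lam - lam^2) * ‖mulE A (x - xbar)‖^2 / F
        = ((2*lam - lam^2)*‖mulE A (x-xbar)‖^2)/F := by ring
    linarith [heq ▸ hdiv]
  have hprob : ∀ K : ℕ, ∑ s : Fin K → Fin m, ∏ j, ‖rowE A (s j)‖^2 / F = 1 := by
    intro K
    induction K with
    | zero => simp
    | succ K ih =>
      rw [snoc_sum K]
      have hterm : ∀ (i : Fin m) (s' : Fin K → Fin m),
          (∏ j, ‖rowE A ((Fin.snoc s' i : Fin (K+1) → Fin m) j)‖^2 / F)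
            = (∏ j, ‖rowE A (s' j)‖^2/F) * (‖rowE A i‖^2/F) := by
        intro i s'
        rw [Fin.prod_univ_castSucc]
        simp
      have h2 : ∀ i : Fin m, ∑ s' : Fin K → Fin m,
          (∏ j, ‖rowE A (s' j)‖^2/F) * (‖rowE A i‖^2/F) = ‖rowE A i‖^2/F := by
        intro i
        rw [← Finset.sum_mul, ih, one_mul]
      calc (∑ i, ∑ s' : Fin K → Fin m,
              ∏ j, ‖rowE A ((Fin.snoc s' i : Fin (K+1) → Fin m) j)‖^2 / F)
          = ∑ i, ∑ s' : Fin K → Fin m, (∏ j, ‖rowE A (s' j)‖^2/F) * (‖rowE A i‖^2/F) :=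
            Finset.sum_congr rfl (fun i _ => Finset.sum_congr rfl (fun s' _ => hterm i s'))
        _ = ∑ i, ‖rowE A i‖^2/F := Finset.sum_congr rfl (fun i _ => h2 i)
        _ = 1 := by
            rw [← Finset.sum_div, ← frobSq_eq, ← hFdef]
            exact div_self (ne_of_gt hF)
  have Pnonneg : ∀ (K : ℕ) (s : Fin K → Fin m), 0 ≤ ∏ j, ‖rowE A (s j)‖^2 / F :=
    fun K s => Finset.prod_nonneg (fun j _ => div_nonneg (sq_nonneg _) hF.le)
  have main : ∀ K : ℕ,
      ∑ s : Fin K → Fin m, (∏ j, ‖rowE A (s j)‖^2 / F) * ‖rkSeq A b lam x0 K s - xbar‖^2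
        ≤ q^K * ‖x0 - xbar‖^2 + C/(1-q) := by
    intro K
    induction K with
    | zero =>
      have hz : ∑ s : Fin 0 → Fin m,
          (∏ j, ‖rowE A (s j)‖^2 / F) * ‖rkSeq A b lam x0 0 s - xbar‖^2
          = ‖x0 - xbar‖^2 := by
        simp [rkSeq]
      rw [hz, pow_zero, one_mul]
      have : 0 ≤ C/(1-q) := div_nonneg hC0 h1q.le
      linarith
    | succ K ih =>
      have hCd : 0 ≤ C / (1 - q) := div_nonneg hC0 h1q.le
      calc ∑ s : Fin (K+1) → Fin m,
            (∏ j, ‖rowE A (s j)‖^2 / F) * ‖rkSeq A b lam x0 (K+1) s - xbar‖^2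
          = ∑ i : Fin m, ∑ s' : Fin K → Fin m,
              (∏ j, ‖rowE A ((Fin.snoc s' i : Fin (K+1) → Fin m) j)‖^2 / F) *
                ‖rkSeq A b lam x0 (K+1) (Fin.snoc s' i) - xbar‖^2 :=
            snoc_sum K _
        _ = ∑ s' : Fin K → Fin m, ∑ i : Fin m,
              ((∏ j, ‖rowE A (s' j)‖^2 / F) * (‖rowE A i‖^2 / F)) *
                ‖rkStep A b lam (rkSeq A b lam x0 K s') i - xbar‖^2 := by
            rw [Finset.sum_comm]
            apply Finset.sum_congr rfl; intro s' _
            apply Finset.sum_congr rfl; intro i _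
            rw [rkSeq_snoc]
            congr 1
            rw [Fin.prod_univ_castSucc]
            simp
        _ = ∑ s' : Fin K → Fin m, (∏ j, ‖rowE A (s' j)‖^2 / F) *
              (∑ i, (‖rowE A i‖^2 / F) *
                ‖rkStep A b lam (rkSeq A b lam x0 K s') i - xbar‖^2) := by
            apply Finset.sum_congr rfl; intro s' _
            rw [Finset.mul_sum]
            apply Finset.sum_congr rfl; intro i _; ring
        _ ≤ ∑ s' : Fin K → Fin m, (∏ j, ‖rowE A (s' j)‖^2 / F) *
              (q * ‖rkSeq A b lam x0 K s' - xbar‖^2 + C) := by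
            apply Finset.sum_le_sum; intro s' _
            exact mul_le_mul_of_nonneg_left
              (hstepbound _ (rkSeq_mem A b lam x0 xbar hx0 hxbar_mem K s')) (Pnonneg K s')
        _ = q * (∑ s' : Fin K → Fin m,
              (∏ j, ‖rowE A (s' j)‖^2 / F) * ‖rkSeq A b lam x0 K s' - xbar‖^2)
              + C * (∑ s' : Fin K → Fin m, ∏ j, ‖rowE A (s' j)‖^2 / F) := by
            rw [Finset.mul_sum, Finset.mul_sum, ← Finset.sum_add_distrib]
            apply Finset.sum_congr rfl; intro s' _; ring
        _ = q * (∑ s' : Fin K → Fin m,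
              (∏ j, ‖rowE A (s' j)‖^2 / F) * ‖rkSeq A b lam x0 K s' - xbar‖^2) + C := by
            rw [hprob K, mul_one]
        _ ≤ q * (q^K * ‖x0 - xbar‖^2 + C/(1-q)) + C :=
            add_le_add_left (mul_le_mul_of_nonneg_left ih hq0) C
        _ = q^(K+1) * ‖x0 - xbar‖^2 + C/(1-q) := by
            field_simp
            ring
  refine le_trans (main k) ?_
  apply add_le_add_right
  have haminpos : 0 < aminSq := by
    obtain ⟨i, hi⟩ := hamin_att; rw [hi]; exact hwpos i
  have hminmax : aminSq ≤ amaxSq := le_trans (hamin_lb i0) (hamax_ub i0)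
  rw [hC, h1qval]
  have hsimp : lam^2 * ‖mulE A xbar - b‖^2 / F / (2 * lam * (1 - lam) * σmin ^ 2 / F)
      = lam * ‖mulE A xbar - b‖^2 / (2 * (1 - lam) * σmin^2) := by
    have hlne : lam ≠ 0 := ne_of_gt hlam0
    have h1lne : (1:ℝ) - lam ≠ 0 := ne_of_gt h1l
    have hσne : σmin ≠ 0 := ne_of_gt hσ_pos
    have hFne : F ≠ 0 := ne_of_gt hF
    field_simp
  rw [hsimp]
  rw [div_le_div_iff₀ (by positivity) (by positivity)]
  nlinarith [mul_nonneg (mul_nonneg (mul_nonneg hlam0.le hE0) h1l.le) (pow_pos hσ_pos 2).le,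
    hminmax, haminpos, hE0]
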